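/- arXiv:2009.12141 — 2 statements merged into one kernel-verified Lean document; each statement's English description precedes it below -/
import Mathlib

section
/- Let p, q : ℝ^d → ℝ be probability density functions with respect to Lebesgue measure, with p everywhere positive, log p twice continuously differentiable, and the gradient ∇ log p Lipschitz continuous with constant L ≥ 0. Let φ : ℝ^d → ℝ^d be continuously differentiable and let ε ≥ 0 be such that the map T(λ) = λ + ε φ(λ) is a C¹ diffeomorphism of ℝ^d. Assume the Kullback–Leibler divergences KL(μ_q ‖ μ_p) and KL(T#μ_q ‖ μ_p) are finite and that the function λ ↦ (-ε ⟨∇log p(λ), φ(λ)⟩ + (L ε²/2) ‖φ(λ)‖² − log |det(I + ε Dφ(λ))|) · q(λ) is Lebesgue integrable, where Dφ(λ) denotes the Jacobian matrix of φ at λ. Then KL(T#μ_q ‖ μ_p) − KL(μ_q ‖ μ_p) ≤ ∫ ( -ε ⟨∇log p(λ), φ(λ)⟩ + (L ε²/2) ‖φ(λ)‖² − log |det(I + ε Dφ(λ))| ) q(λ) dλ. -/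
open MeasureTheory
open scoped Classical

/-- The Kullback–Leibler divergence between two measures: `∫ log (dμ/dν) dμ`
when `μ ≪ ν` and the log-likelihood ratio is integrable, `+∞` otherwise. -/
noncomputable def klDiv {α : Type*} [MeasurableSpace α] (μ ν : Measure α) : EReal :=
  if μ ≪ ν ∧ Integrable (llr μ ν) μ then ((∫ x, llr μ ν x ∂μ : ℝ) : EReal) else ⊤

/-- The measure on `ℝ^d` with density `f` with respect to Lebesgue measure. -/
noncomputable def densityMeasure {d : ℕ} (f : EuclideanSpace ℝ (Fin d) → ℝ) :
    Measure (EuclideanSpace ℝ (Fin d)) :=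
  volume.withDensity fun x => ENNReal.ofReal (f x)

/-!
Write `Q = μ_q`, `P = μ_p` and `T λ = λ + ε φ λ`. Since `T` is a diffeomorphism, `T#Q` has density
`q ∘ T⁻¹ / |det DT ∘ T⁻¹|`, so pulling the log-likelihood ratio of `T#Q` back along `T`,
`KL(T#Q ‖ P) - KL(Q ‖ P) = ∫ (log p - log p ∘ T - log |det DT|) dQ`.
The descent lemma for the `L`-smooth function `log p` bounds `log p λ - log p (T λ)` by
`-ε ⟪∇ log p λ, φ λ⟫ + (L ε² / 2) ‖φ λ‖²`.
-/

open Real Function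

section Descent

variable {E : Type*} [NormedAddCommGroup E] [InnerProductSpace ℝ E] [CompleteSpace E]

theorem apply_sub_apply_add_le_of_lipschitz_gradient {f : E → ℝ} (hf : Differentiable ℝ f)
    {L : ℝ} (hlip : ∀ x y, ‖gradient f x - gradient f y‖ ≤ L * ‖x - y‖) (x v : E) :
    f x - f (x + v) ≤ -inner ℝ (gradient f x) v + L / 2 * ‖v‖ ^ 2 := by
  set h : ℝ → ℝ := fun t =>
    f (x + t • v) - t * inner ℝ (gradient f x) v + L / 2 * t ^ 2 * ‖v‖ ^ 2
  have hderiv : ∀ t, HasDerivAt h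
      (inner ℝ (gradient f (x + t • v) - gradient f x) v + L * t * ‖v‖ ^ 2) t := by
    intro t
    have hline : HasDerivAt (fun t : ℝ => x + t • v) v t := by
      simpa using ((hasDerivAt_id t).smul_const v).const_add x
    have hf_line :
        HasDerivAt (fun t : ℝ => f (x + t • v)) (inner ℝ (gradient f (x + t • v)) v) t := by
      rw [inner_gradient_left]
      exact (hf _).hasFDerivAt.comp_hasDerivAt t hline
    refine ((hf_line.sub ((hasDerivAt_id t).mul_const (inner ℝ (gradient f x) v))).add
      (((hasDerivAt_pow 2 t).const_mul (L / 2)).mul_const (‖v‖ ^ 2))).congr_deriv ?_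
    simp only [inner_sub_left, Nat.cast_ofNat, Nat.add_one_sub_one, pow_one, one_mul]
    ring
  have hmono : MonotoneOn h (Set.Ici 0) := by
    refine monotoneOn_of_hasDerivWithinAt_nonneg (convex_Ici 0)
      (fun t _ => (hderiv t).continuousAt.continuousWithinAt)
      (fun t _ => (hderiv t).hasDerivWithinAt) fun t ht => ?_
    rw [interior_Ici, Set.mem_Ioi] at ht
    have hgrad : ‖gradient f (x + t • v) - gradient f x‖ ≤ L * (t * ‖v‖) := by
      simpa [norm_smul, abs_of_pos ht] using hlip (x + t • v) x
    have hinner :=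
      (abs_le.mp (abs_real_inner_le_norm (gradient f (x + t • v) - gradient f x) v)).1
    nlinarith [norm_nonneg v]
  have h01 := hmono Set.self_mem_Ici (Set.mem_Ici.mpr zero_le_one) zero_le_one
  simp only [h, zero_smul, add_zero, one_smul, zero_mul, sub_zero, one_mul] at h01
  linarith

end Descent

section JacobianInverse

variable {E : Type*} [NormedAddCommGroup E] [NormedSpace ℝ E] {S T : E → E} {x : E}

theorem det_fderiv_mul_det_fderiv_of_leftInverse (hST : LeftInverse S T)
    (hS : DifferentiableAt ℝ S (T x)) (hT : DifferentiableAt ℝ T x) :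
    (fderiv ℝ S (T x)).det * (fderiv ℝ T x).det = 1 := by
  have hchain := hS.hasFDerivAt.comp x hT.hasFDerivAt
  rw [hST.comp_eq_id] at hchain
  rw [← map_mul, Module.End.mul_eq_comp, ← ContinuousLinearMap.toLinearMap_comp,
    hchain.unique (hasFDerivAt_id x), ContinuousLinearMap.coe_id, LinearMap.det_id]

end JacobianInverse

section WithDensity

variable {α : Type*} [MeasurableSpace α] {μ : Measure α} {f g : α → ℝ}

theorem ae_withDensity_ofReal_pos (hf : Measurable f) :
    ∀ᵐ x ∂μ.withDensity (fun x => ENNReal.ofReal (f x)), 0 < f x := by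
  rw [ae_withDensity_iff hf.ennreal_ofReal]
  exact ae_of_all _ fun x hx => ENNReal.ofReal_pos.mp (pos_iff_ne_zero.mpr hx)

theorem integral_withDensity_ofReal (hf : Measurable f) (hf_nonneg : ∀ x, 0 ≤ f x) (g : α → ℝ) :
    ∫ x, g x ∂μ.withDensity (fun x => ENNReal.ofReal (f x)) = ∫ x, g x * f x ∂μ := by
  rw [integral_withDensity_eq_integral_toReal_smul hf.ennreal_ofReal
    (ae_of_all _ fun _ => ENNReal.ofReal_lt_top)]
  simp only [ENNReal.toReal_ofReal (hf_nonneg _), smul_eq_mul, mul_comm]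

theorem integrable_withDensity_ofReal_iff (hf : Measurable f) (hf_nonneg : ∀ x, 0 ≤ f x) :
    Integrable g (μ.withDensity fun x => ENNReal.ofReal (f x)) ↔
      Integrable (fun x => g x * f x) μ := by
  simp only [integrable_withDensity_iff hf.ennreal_ofReal
    (ae_of_all _ fun _ => ENNReal.ofReal_lt_top), ENNReal.toReal_ofReal (hf_nonneg _)]

theorem llr_withDensity_ofReal [SigmaFinite μ] (hf : Measurable f) (hg : Measurable g)
    (hg_pos : ∀ x, 0 < g x) :
    llr (μ.withDensity fun x => ENNReal.ofReal (f x)) (μ.withDensity fun x => ENNReal.ofReal (g x))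
      =ᵐ[μ.withDensity fun x => ENNReal.ofReal (f x)] fun x => log (f x / g x) := by
  have hratio : Measurable fun x => ENNReal.ofReal (f x) / ENNReal.ofReal (g x) :=
    hf.ennreal_ofReal.div hg.ennreal_ofReal
  have hrepr : (μ.withDensity fun x => ENNReal.ofReal (f x)) =
      (μ.withDensity fun x => ENNReal.ofReal (g x)).withDensity
        fun x => ENNReal.ofReal (f x) / ENNReal.ofReal (g x) := by
    rw [← withDensity_mul _ hg.ennreal_ofReal hratio]
    congr 1 with x
    exact (ENNReal.mul_div_cancel (ENNReal.ofReal_pos.mpr (hg_pos x)).ne'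
      ENNReal.ofReal_ne_top).symm
  have hrn := Measure.rnDeriv_withDensity (μ.withDensity fun x => ENNReal.ofReal (g x)) hratio
  rw [← hrepr] at hrn
  have hac : (μ.withDensity fun x => ENNReal.ofReal (f x))
      ≪ μ.withDensity fun x => ENNReal.ofReal (g x) :=
    hrepr ▸ withDensity_absolutelyContinuous _ _
  filter_upwards [hac.ae_le hrn, ae_withDensity_ofReal_pos hf] with x hx hfx
  rw [llr, hx, ENNReal.toReal_div, ENNReal.toReal_ofReal hfx.le,
    ENNReal.toReal_ofReal (hg_pos x).le]

end WithDensity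

section ChangeOfVariables

variable {E : Type*} [NormedAddCommGroup E] [NormedSpace ℝ E] [FiniteDimensional ℝ E]
  [MeasurableSpace E] [BorelSpace E] (μ : Measure E) [μ.IsAddHaarMeasure] {S T : E → E}

theorem map_withDensity_ofReal_eq_of_leftInverse (hT : Measurable T) (hS : Differentiable ℝ S)
    (hST : LeftInverse S T) (hTS : RightInverse S T) (f : E → ℝ) :
    (μ.withDensity fun x => ENNReal.ofReal (f x)).map T
      = μ.withDensity fun x => ENNReal.ofReal (|(fderiv ℝ S x).det| * f (S x)) := by
  ext A hA
  have himage : S '' A = T ⁻¹' A := by rw [Set.image_eq_preimage_of_inverse hTS hST]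
  rw [Measure.map_apply hT hA, ← himage, withDensity_apply _ (himage ▸ hT hA),
    withDensity_apply _ hA, lintegral_image_eq_lintegral_abs_det_fderiv_mul μ hA
      (fun x _ => (hS x).hasFDerivAt.hasFDerivWithinAt) hTS.injective.injOn]
  simp only [ENNReal.ofReal_mul (abs_nonneg _)]

theorem llr_map_comp_sub_llr_withDensity_ofReal_ae_eq {q p : E → ℝ} (hq : Measurable q)
    (hp : Measurable p) (hp_pos : ∀ x, 0 < p x) (hT : Differentiable ℝ T)
    (hS : Differentiable ℝ S) (hST : LeftInverse S T) (hTS : RightInverse S T) :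
    (fun x => llr ((μ.withDensity fun x => ENNReal.ofReal (q x)).map T)
          (μ.withDensity fun x => ENNReal.ofReal (p x)) (T x)
        - llr (μ.withDensity fun x => ENNReal.ofReal (q x))
          (μ.withDensity fun x => ENNReal.ofReal (p x)) x)
      =ᵐ[μ.withDensity fun x => ENNReal.ofReal (q x)]
        fun x => log (p x) - log (p (T x)) - log |(fderiv ℝ T x).det| := by
  have hmap := map_withDensity_ofReal_eq_of_leftInverse μ hT.continuous.measurable hS hST hTS q
  have hqS : Measurable fun x => |(fderiv ℝ S x).det| * q (S x) :=
    (ContinuousLinearMap.continuous_det.measurable.comp (measurable_fderiv ℝ S)).abs.mul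
      (hq.comp hS.continuous.measurable)
  have hllr_map : ∀ᵐ y ∂(μ.withDensity fun x => ENNReal.ofReal (q x)).map T,
      llr ((μ.withDensity fun x => ENNReal.ofReal (q x)).map T)
        (μ.withDensity fun x => ENNReal.ofReal (p x)) y
        = log (|(fderiv ℝ S y).det| * q (S y) / p y) := by
    rw [hmap]
    exact llr_withDensity_ofReal hqS hp hp_pos
  filter_upwards [ae_of_ae_map hT.continuous.aemeasurable hllr_map,
    llr_withDensity_ofReal hq hp hp_pos, ae_withDensity_ofReal_pos hq]
    with x hx_map hx hqx
  have hdet : |(fderiv ℝ S (T x)).det| * |(fderiv ℝ T x).det| = 1 := by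
    rw [← abs_mul, det_fderiv_mul_det_fderiv_of_leftInverse hST (hS _) (hT x), abs_one]
  have hlog_det : log |(fderiv ℝ S (T x)).det| = -log |(fderiv ℝ T x).det| := by
    rw [eq_neg_iff_add_eq_zero, ← log_mul (left_ne_zero_of_mul_eq_one hdet)
      (right_ne_zero_of_mul_eq_one hdet), hdet, log_one]
  rw [hx_map, hx, hST x, log_div (mul_ne_zero (left_ne_zero_of_mul_eq_one hdet) hqx.ne')
    (hp_pos _).ne', log_mul (left_ne_zero_of_mul_eq_one hdet) hqx.ne', hlog_det,
    log_div hqx.ne' (hp_pos x).ne']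
  ring

end ChangeOfVariables

section KullbackLeibler

variable {α : Type*} [MeasurableSpace α] {μ ν : Measure α} {T : α → α}

theorem integrable_llr_of_klDiv_ne_top (h : klDiv μ ν ≠ ⊤) : Integrable (llr μ ν) μ := by
  by_contra h_int
  exact h (if_neg fun h' => h_int h'.2)

theorem toReal_klDiv_of_ne_top (h : klDiv μ ν ≠ ⊤) :
    (klDiv μ ν).toReal = ∫ x, llr μ ν x ∂μ := by
  by_cases hac : μ ≪ ν ∧ Integrable (llr μ ν) μ
  · rw [klDiv, if_pos hac, EReal.toReal_coe]
  · exact absurd (if_neg hac) h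

theorem integrable_llr_map_comp_of_klDiv_ne_top (hT : Measurable T)
    (h_map : klDiv (μ.map T) ν ≠ ⊤) : Integrable (fun x => llr (μ.map T) ν (T x)) μ :=
  (integrable_map_measure (measurable_llr _ _).aestronglyMeasurable hT.aemeasurable).mp
    (integrable_llr_of_klDiv_ne_top h_map)

theorem integrable_llr_map_comp_sub_llr (hT : Measurable T) (h : klDiv μ ν ≠ ⊤)
    (h_map : klDiv (μ.map T) ν ≠ ⊤) :
    Integrable (fun x => llr (μ.map T) ν (T x) - llr μ ν x) μ :=
  (integrable_llr_map_comp_of_klDiv_ne_top hT h_map).sub (integrable_llr_of_klDiv_ne_top h)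

theorem toReal_klDiv_map_sub_toReal_klDiv (hT : Measurable T) (h : klDiv μ ν ≠ ⊤)
    (h_map : klDiv (μ.map T) ν ≠ ⊤) :
    (klDiv (μ.map T) ν).toReal - (klDiv μ ν).toReal
      = ∫ x, (llr (μ.map T) ν (T x) - llr μ ν x) ∂μ := by
  rw [toReal_klDiv_of_ne_top h_map, toReal_klDiv_of_ne_top h,
    integral_map hT.aemeasurable (measurable_llr _ _).aestronglyMeasurable,
    integral_sub (integrable_llr_map_comp_of_klDiv_ne_top hT h_map)
      (integrable_llr_of_klDiv_ne_top h)]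

end KullbackLeibler

theorem klDiv_pushforward_sub_klDiv_le_general {d : ℕ}
    (q p : EuclideanSpace ℝ (Fin d) → ℝ)
    (hq_meas : Measurable q) (hq_nonneg : ∀ x, 0 ≤ q x)
    (hp_meas : Measurable p) (hp_pos : ∀ x, 0 < p x)
    (hlogp : ContDiff ℝ 2 (fun x => Real.log (p x)))
    (L : ℝ)
    (hlip : ∀ x y : EuclideanSpace ℝ (Fin d),
      ‖gradient (fun z => Real.log (p z)) x
        - gradient (fun z => Real.log (p z)) y‖ ≤ L * ‖x - y‖)
    (φ : EuclideanSpace ℝ (Fin d) → EuclideanSpace ℝ (Fin d))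
    (hφ : ContDiff ℝ 1 φ) (ε : ℝ)
    (S : EuclideanSpace ℝ (Fin d) → EuclideanSpace ℝ (Fin d))
    (hS : ContDiff ℝ 1 S)
    (hST : Function.LeftInverse S (fun lam => lam + ε • φ lam))
    (hTS : Function.RightInverse S (fun lam => lam + ε • φ lam))
    (hfin₁ : klDiv (densityMeasure q) (densityMeasure p) ≠ ⊤)
    (hfin₂ : klDiv ((densityMeasure q).map (fun lam => lam + ε • φ lam))
      (densityMeasure p) ≠ ⊤)
    (hint : Integrable (fun lam =>
      (-ε * (inner ℝ (gradient (fun z => Real.log (p z)) lam) (φ lam) : ℝ)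
        + L * ε ^ 2 / 2 * ‖φ lam‖ ^ 2
        - Real.log
            |(ContinuousLinearMap.id ℝ (EuclideanSpace ℝ (Fin d))
              + ε • fderiv ℝ φ lam).det|) * q lam)) :
    (klDiv ((densityMeasure q).map (fun lam => lam + ε • φ lam))
          (densityMeasure p)).toReal
        - (klDiv (densityMeasure q) (densityMeasure p)).toReal
      ≤ ∫ lam,
          (-ε * (inner ℝ (gradient (fun z => Real.log (p z)) lam) (φ lam) : ℝ)
            + L * ε ^ 2 / 2 * ‖φ lam‖ ^ 2
            - Real.log
                |(ContinuousLinearMap.id ℝ (EuclideanSpace ℝ (Fin d))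
                  + ε • fderiv ℝ φ lam).det|) * q lam := by
  unfold densityMeasure at hfin₁ hfin₂ ⊢
  have hφ' : Differentiable ℝ φ := hφ.differentiable one_ne_zero
  have hT : Differentiable ℝ fun lam => lam + ε • φ lam :=
    differentiable_id.add (hφ'.const_smul ε)
  have hDT : ∀ lam, fderiv ℝ (fun lam => lam + ε • φ lam) lam
      = ContinuousLinearMap.id ℝ (EuclideanSpace ℝ (Fin d)) + ε • fderiv ℝ φ lam :=
    fun lam => ((hasFDerivAt_id lam).add ((hφ' lam).hasFDerivAt.const_smul ε)).fderiv
  have hllr_diff := llr_map_comp_sub_llr_withDensity_ofReal_ae_eq volume hq_meas hp_meas hp_pos hT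
    (hS.differentiable one_ne_zero) hST hTS
  rw [toReal_klDiv_map_sub_toReal_klDiv hT.continuous.measurable hfin₁ hfin₂,
    integral_congr_ae hllr_diff, ← integral_withDensity_ofReal hq_meas hq_nonneg]
  refine integral_mono
    ((integrable_llr_map_comp_sub_llr hT.continuous.measurable hfin₁ hfin₂).congr hllr_diff)
    ((integrable_withDensity_ofReal_iff hq_meas hq_nonneg).2 hint) fun lam => ?_
  have hdescent := apply_sub_apply_add_le_of_lipschitz_gradient
    (hlogp.differentiable two_ne_zero) hlip lam (ε • φ lam)
  simp only [hDT, real_inner_smul_right, norm_smul, mul_pow, Real.norm_eq_abs, sq_abs]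
    at hdescent ⊢
  linarith

/-- Core inequality in the proof of Theorem 1: for probability
densities `p, q` with `p > 0`, `log p` C², `∇ log p` `L`-Lipschitz, a C¹ map
`φ` and `ε ≥ 0` such that `T(λ) = λ + ε φ(λ)` is a C¹ diffeomorphism of `ℝ^d`
(with C¹ inverse `S`), assuming the KL divergences are finite and the
integrand is integrable,
`KL(T#μ_q ‖ μ_p) − KL(μ_q ‖ μ_p)
  ≤ ∫ (-ε ⟪∇ log p(λ), φ(λ)⟫ + (L ε²/2)‖φ(λ)‖² − log |det (I + ε Dφ(λ))|) q(λ) dλ`. -/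
theorem klDiv_pushforward_sub_klDiv_le {d : ℕ}
    (q p : EuclideanSpace ℝ (Fin d) → ℝ)
    (hq_meas : Measurable q) (hq_nonneg : ∀ x, 0 ≤ q x)
    (hq_int : ∫ x, q x = 1)
    (hp_meas : Measurable p) (hp_pos : ∀ x, 0 < p x)
    (hp_int : ∫ x, p x = 1)
    (hlogp : ContDiff ℝ 2 (fun x => Real.log (p x)))
    (L : ℝ) (hL : 0 ≤ L)
    (hlip : ∀ x y : EuclideanSpace ℝ (Fin d),
      ‖gradient (fun z => Real.log (p z)) x
        - gradient (fun z => Real.log (p z)) y‖ ≤ L * ‖x - y‖)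
    (φ : EuclideanSpace ℝ (Fin d) → EuclideanSpace ℝ (Fin d))
    (hφ : ContDiff ℝ 1 φ) (ε : ℝ) (hε : 0 ≤ ε)
    (S : EuclideanSpace ℝ (Fin d) → EuclideanSpace ℝ (Fin d))
    (hS : ContDiff ℝ 1 S)
    (hST : Function.LeftInverse S (fun lam => lam + ε • φ lam))
    (hTS : Function.RightInverse S (fun lam => lam + ε • φ lam))
    (hfin₁ : klDiv (densityMeasure q) (densityMeasure p) ≠ ⊤)
    (hfin₂ : klDiv ((densityMeasure q).map (fun lam => lam + ε • φ lam))
      (densityMeasure p) ≠ ⊤)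
    (hint : Integrable (fun lam =>
      (-ε * (inner ℝ (gradient (fun z => Real.log (p z)) lam) (φ lam) : ℝ)
        + L * ε ^ 2 / 2 * ‖φ lam‖ ^ 2
        - Real.log
            |(ContinuousLinearMap.id ℝ (EuclideanSpace ℝ (Fin d))
              + ε • fderiv ℝ φ lam).det|) * q lam)) :
    (klDiv ((densityMeasure q).map (fun lam => lam + ε • φ lam))
          (densityMeasure p)).toReal
        - (klDiv (densityMeasure q) (densityMeasure p)).toReal
      ≤ ∫ lam,
          (-ε * (inner ℝ (gradient (fun z => Real.log (p z)) lam) (φ lam) : ℝ)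
            + L * ε ^ 2 / 2 * ‖φ lam‖ ^ 2
            - Real.log
                |(ContinuousLinearMap.id ℝ (EuclideanSpace ℝ (Fin d))
                  + ε • fderiv ℝ φ lam).det|) * q lam :=
  klDiv_pushforward_sub_klDiv_le_general q p hq_meas hq_nonneg hp_meas hp_pos hlogp L hlip φ hφ ε S
    hS hST hTS hfin₁ hfin₂ hint
end

section
/- Let B be a real symmetric d × d matrix and let ε ≥ 0 be such that every eigenvalue μ of ε B satisfies μ ≥ −1/2 (for instance, ε ‖B‖_op ≤ 1/2 suffices). Then the matrix I + ε B is positive definite and log det(I + ε B) ≥ ε trace(B) − ε² ‖B‖_F², where ‖B‖_F denotes the Frobenius norm of B. -/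
/-!
Diagonalising `ε • B`, the determinant, the trace and the squared Frobenius norm all become sums
over its eigenvalues `μᵢ ≥ -1/2`, and the claim reduces to the scalar inequality
`x - x² ≤ log (1 + x)` for `x ≥ -1/2`.
-/

open Matrix Real
open scoped MatrixOrder ComplexOrder

lemma Real.sub_sq_le_log_one_add {x : ℝ} (hx : -(1 / 2) ≤ x) : x - x ^ 2 ≤ log (1 + x) := by
  have hexp : 1 ≤ (1 + x) * exp (x ^ 2 - x) := by
    -- with `y = x² - x`: `exp y ≥ 1 + y` for `x ≥ 0`, `exp y ≥ 1 + y + y²/2` for `x ≤ 0`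
    rcases le_total 0 x with hx0 | hx0
    · nlinarith [add_one_le_exp (x ^ 2 - x), pow_nonneg hx0 3]
    · nlinarith [quadratic_le_exp_of_nonneg (show 0 ≤ x ^ 2 - x by nlinarith),
        mul_nonneg (neg_nonneg.2 hx0) (sq_nonneg x)]
  rw [le_log_iff_exp_le (by linarith), ← mul_one (exp _)]
  calc exp (x - x ^ 2) * 1 ≤ exp (x - x ^ 2) * ((1 + x) * exp (x ^ 2 - x)) := by gcongr
    _ = 1 + x := by rw [mul_left_comm, ← exp_add]; simp

namespace Matrix.IsHermitian
variable {n 𝕜 : Type*} [Fintype n] [DecidableEq n] [RCLike 𝕜] {A : Matrix n n 𝕜}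

lemma det_cfc (hA : A.IsHermitian) (f : ℝ → ℝ) :
    (cfc f A).det = ∏ i, (f (hA.eigenvalues i) : 𝕜) := by
  simp [hA.cfc_eq, IsHermitian.cfc, -Unitary.conjStarAlgAut_apply]

lemma trace_cfc (hA : A.IsHermitian) (f : ℝ → ℝ) :
    (cfc f A).trace = ∑ i, (f (hA.eigenvalues i) : 𝕜) := by
  simp [hA.cfc_eq, IsHermitian.cfc, -Unitary.conjStarAlgAut_apply]

lemma cfc_one_add (hA : A.IsHermitian) : cfc (fun x : ℝ => 1 + x) A = 1 + A := by
  rw [cfc_const_add (1 : ℝ) (fun x => x) A, cfc_id' ℝ A, map_one]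

lemma posDef_one_add (hA : A.IsHermitian) (h : ∀ μ ∈ spectrum ℝ A, -1 < μ) : (1 + A).PosDef := by
  rw [← isStrictlyPositive_iff_posDef, ← hA.cfc_one_add,
    cfc_isStrictlyPositive_iff (fun x : ℝ => 1 + x) A]
  intro μ hμ
  linarith [h μ hμ]

lemma trace_sub_trace_sq_le_log_det_one_add {A : Matrix n n ℝ} (hA : A.IsHermitian)
    (h : ∀ μ ∈ spectrum ℝ A, -(1 / 2) ≤ μ) : A.trace - (A ^ 2).trace ≤ log (1 + A).det := by
  have hμ (i : n) : -(1 / 2) ≤ hA.eigenvalues i := h _ (hA.eigenvalues_mem_spectrum_real i)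
  calc A.trace - (A ^ 2).trace = ∑ i, (hA.eigenvalues i - hA.eigenvalues i ^ 2) := by
        rw [← cfc_pow_id (R := ℝ) A 2, hA.trace_cfc, hA.trace_eq_sum_eigenvalues]
        simp [Finset.sum_sub_distrib]
    _ ≤ ∑ i, log (1 + hA.eigenvalues i) :=
        Finset.sum_le_sum fun i _ => sub_sq_le_log_one_add (hμ i)
    _ = log (1 + A).det := by
        rw [← hA.cfc_one_add, hA.det_cfc]
        simp only [RCLike.ofReal_real_eq_id, id]
        exact (log_prod fun i _ => by linarith [hμ i]).symm

end Matrix.IsHermitian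

lemma Matrix.trace_mul_transpose_self {m n R : Type*} [Fintype m] [Fintype n] [CommSemiring R]
    (B : Matrix m n R) : (B * Bᵀ).trace = ∑ i, ∑ j, B i j ^ 2 := by
  simp [trace, mul_apply, sq]

theorem log_det_one_add_smul_ge_general {d : ℕ} (B : Matrix (Fin d) (Fin d) ℝ)
    (hsymm : B.IsSymm) (ε : ℝ)
    (heig : ∀ μ ∈ spectrum ℝ (ε • B), -(1/2) ≤ μ) :
    ((1 : Matrix (Fin d) (Fin d) ℝ) + ε • B).PosDef ∧
    Real.log ((1 : Matrix (Fin d) (Fin d) ℝ) + ε • B).det ≥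
      ε * B.trace - ε ^ 2 * (∑ i, ∑ j, (B i j) ^ 2) := by
  have hA : (ε • B).IsHermitian := isHermitian_iff_isSymm.mpr (hsymm.smul ε)
  refine ⟨hA.posDef_one_add fun μ hμ => by linarith [heig μ hμ], ?_⟩
  have htrace_sq : ((ε • B) ^ 2).trace = ε ^ 2 * ∑ i, ∑ j, B i j ^ 2 := by
    rw [smul_pow, trace_smul, sq B, ← trace_mul_transpose_self, hsymm.eq, smul_eq_mul]
  have h := hA.trace_sub_trace_sq_le_log_det_one_add heig
  rwa [htrace_sq, trace_smul, smul_eq_mul] at h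

/-- Let `B` be a real symmetric `d × d` matrix and `ε ≥ 0` be such
that every (real) eigenvalue `μ` of `ε • B` satisfies `μ ≥ -1/2`. Then
`I + ε • B` is positive definite and
`log det (I + ε • B) ≥ ε * trace B - ε² * ‖B‖_F²`, where `‖B‖_F` is the
Frobenius norm of `B`. -/
theorem log_det_one_add_smul_ge {d : ℕ} (B : Matrix (Fin d) (Fin d) ℝ)
    (hsymm : B.IsSymm) (ε : ℝ) (hε : 0 ≤ ε)
    (heig : ∀ μ ∈ spectrum ℝ (ε • B), -(1/2) ≤ μ) :
    ((1 : Matrix (Fin d) (Fin d) ℝ) + ε • B).PosDef ∧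
    Real.log ((1 : Matrix (Fin d) (Fin d) ℝ) + ε • B).det ≥
      ε * B.trace - ε ^ 2 * (∑ i, ∑ j, (B i j) ^ 2) :=
  log_det_one_add_smul_ge_general B hsymm ε heig
end
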